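/- (Gluing lemma, part 3) With notation as in the gluing setup, let σ be a density matrix on H_L ⊗ ℂ^B, v a unit vector in H_L ⊗ H_R with Schmidt decomposition v = Σ_{j=1}^B λ_j a_j ⊗ b_j, U_v the associated isometry, and σ' = (Id⊗U_v) σ (Id⊗U_v)*. Suppose H = H_L' + H_i + H_R' where H_L' acts only on H_L, H_R' acts only on H_R, and H_i acts only on the i-th qudit factor of H_L and H_R (with ‖H_i + H_R'‖ ≤ n). Then Tr(σ' H) ≤ Tr(σ (H_L' ⊗ Id)) + ⟨v, (H_R' + H_i) v⟩ + n · ‖Tr_{[1,…,i-1]}(σ) - cont(v)‖₁, where cont(v) := U_v Tr_{[1,…,i-1]}(|v⟩⟨v|) U_v* and ‖·‖₁ is the trace norm. -/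

import Mathlib

open scoped ComplexOrder Kronecker Matrix

/-- The trace norm (sum of singular values) of a square complex matrix. -/
noncomputable def traceNorm {n : Type*} [Fintype n] [DecidableEq n]
    (M : Matrix n n ℂ) : ℝ :=
  (((Matrix.posSemidef_conjTranspose_mul_self M).1.eigenvectorUnitary.1 *
      Matrix.diagonal (((↑) : ℝ → ℂ) ∘ (√·) ∘ (Matrix.posSemidef_conjTranspose_mul_self M).1.eigenvalues) *
      (star (Matrix.posSemidef_conjTranspose_mul_self M).1.eigenvectorUnitary : Matrix n n ℂ)).trace).re

/-- Partial trace over the first factor of `H_{[1,i-1]} ⊗ H_i ⊗ (third factor)`,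
in the matrix model with index type `(α × γ) × β`. -/
noncomputable def ptraceFirst {α γ β : Type*} [Fintype α]
    (M : Matrix ((α × γ) × β) ((α × γ) × β) ℂ) : Matrix (γ × β) (γ × β) ℂ :=
  Matrix.of fun x y => ∑ a, M ((a, x.1), x.2) ((a, y.1), y.2)

/-- Elementary tensor of two vectors, in the function model of a tensor product. -/
noncomputable def tens {α β : Type*} (a : α → ℂ) (b : β → ℂ) : α × β → ℂ :=
  fun x => a x.1 * b x.2

/-!
Write the Schmidt vector as `v = (1 ⊗ U) v₀` with `v₀ = ∑ⱼ λⱼ aⱼ ⊗ eⱼ`. Since `U` is an isometry,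
`cont(v)` is the reduced density matrix of `v₀`, and conjugating by `1 ⊗ U` leaves the
`H_L' ⊗ 1` energy of `σ` unchanged. The operator `H_i + H_R'` is the identity on the qudits
`1, …, i-1`, so its energy in `σ'` and in `v` depends only on the reduced density matrices of `σ`
and `v₀`, paired with `N = (1 ⊗ U)ᴴ (H_i + H_R') (1 ⊗ U)`. The error term is therefore
`Re Tr((Tr_{[1,i-1]} σ - cont(v)) N)`; `N` inherits the numerical-range bound `n`, and
diagonalising the Hermitian difference bounds this by `n` times its trace norm.
-/

open Matrix

section NumericalRange

variable {k m : Type*} [Fintype k] [Fintype m]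

lemma traceNorm_eq_sum_abs_eigenvalues [DecidableEq m] {X : Matrix m m ℂ} (hX : X.IsHermitian) :
    traceNorm X = ∑ i, |hX.eigenvalues i| := by
  have hY : (Xᴴ * X).IsHermitian := (posSemidef_conjTranspose_mul_self X).1
  have htr : ∀ (u : unitaryGroup m ℂ) (D : Matrix m m ℂ),
      ((u : Matrix m m ℂ) * D * star (u : Matrix m m ℂ)).trace = D.trace := by
    intro u D
    rw [trace_mul_cycle, (mem_unitaryGroup_iff').mp u.2, Matrix.one_mul]
  have hsqrt : cfc (fun x : ℝ => √x) (Xᴴ * X) = cfc (fun x : ℝ => |x|) X := by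
    rw [hX.eq, ← pow_two, ← cfc_pow_id (R := ℝ) X 2 hX.isSelfAdjoint,
      ← cfc_comp (fun x : ℝ => √x) (fun x : ℝ => x ^ 2) X hX.isSelfAdjoint]
    simp only [Function.comp_def, Real.sqrt_sq_eq_abs]
  calc traceNorm X = (hY.cfc (fun x => √x)).trace.re := by
        rw [traceNorm, IsHermitian.cfc, Unitary.conjStarAlgAut_apply, htr, htr]; rfl
    _ = (hX.cfc (fun x => |x|)).trace.re := by rw [← hY.cfc_eq, hsqrt, hX.cfc_eq]
    _ = ∑ i, |hX.eigenvalues i| := by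
        rw [IsHermitian.cfc, Unitary.conjStarAlgAut_apply, htr, trace_diagonal, Complex.re_sum]
        simp

lemma norm_dotProduct_conjTranspose_mul_mul_mulVec_le [DecidableEq m] {n : ℝ} {K : Matrix k k ℂ}
    {W : Matrix k m ℂ} (hW : Wᴴ * W = 1)
    (hK : ∀ w : k → ℂ, ‖star w ⬝ᵥ (K *ᵥ w)‖ ≤ n * (star w ⬝ᵥ w).re) (w : m → ℂ) :
    ‖star w ⬝ᵥ ((Wᴴ * K * W) *ᵥ w)‖ ≤ n * (star w ⬝ᵥ w).re := by
  have hnorm : star (W *ᵥ w) ⬝ᵥ (W *ᵥ w) = star w ⬝ᵥ w := by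
    rw [star_mulVec, ← dotProduct_mulVec, mulVec_mulVec, hW, one_mulVec]
  have hform : star (W *ᵥ w) ⬝ᵥ (K *ᵥ (W *ᵥ w)) = star w ⬝ᵥ ((Wᴴ * K * W) *ᵥ w) := by
    rw [star_mulVec, ← dotProduct_mulVec, mulVec_mulVec, mulVec_mulVec, Matrix.mul_assoc]
  rw [← hform, ← hnorm]
  exact hK (W *ᵥ w)

lemma norm_apply_self_le [DecidableEq k] {n : ℝ} {K : Matrix k k ℂ}
    (hK : ∀ w : k → ℂ, ‖star w ⬝ᵥ (K *ᵥ w)‖ ≤ n * (star w ⬝ᵥ w).re) (i : k) :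
    ‖K i i‖ ≤ n := by
  simpa using hK (Pi.single i 1)

lemma re_trace_mul_le_mul_traceNorm [DecidableEq m] {n : ℝ} {X M : Matrix m m ℂ}
    (hX : X.IsHermitian)
    (hM : ∀ w : m → ℂ, ‖star w ⬝ᵥ (M *ᵥ w)‖ ≤ n * (star w ⬝ᵥ w).re) :
    (trace (X * M)).re ≤ n * traceNorm X := by
  set V : Matrix m m ℂ := (hX.eigenvectorUnitary : Matrix m m ℂ)
  have hV : Vᴴ * V = 1 := (mem_unitaryGroup_iff').mp hX.eigenvectorUnitary.2
  have htrace : trace (X * M) = ∑ i, (hX.eigenvalues i : ℂ) * (Vᴴ * M * V) i i := by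
    conv_lhs => rw [hX.spectral_theorem, Unitary.conjStarAlgAut_apply]
    rw [Matrix.mul_assoc, Matrix.mul_assoc, trace_mul_comm, Matrix.mul_assoc]
    simp [trace, diagonal_mul, V, star_eq_conjTranspose]
  have hdiag := norm_apply_self_le (norm_dotProduct_conjTranspose_mul_mul_mulVec_le hV hM)
  rw [htrace, Complex.re_sum, traceNorm_eq_sum_abs_eigenvalues hX, Finset.mul_sum]
  refine Finset.sum_le_sum fun i _ => ?_
  calc ((hX.eigenvalues i : ℂ) * (Vᴴ * M * V) i i).re
      ≤ ‖(hX.eigenvalues i : ℂ) * (Vᴴ * M * V) i i‖ := Complex.re_le_norm _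
    _ ≤ |hX.eigenvalues i| * n := by
        rw [norm_mul, Complex.norm_real, Real.norm_eq_abs]
        exact mul_le_mul_of_nonneg_left (hdiag i) (abs_nonneg _)
    _ = n * |hX.eigenvalues i| := mul_comm _ _

end NumericalRange

section PartialTrace

variable {α γ β : Type*}

lemma isHermitian_ptraceFirst [Fintype α] {M : Matrix ((α × γ) × β) ((α × γ) × β) ℂ}
    (hM : M.IsHermitian) : (ptraceFirst M).IsHermitian := by
  ext x y
  simpa [ptraceFirst] using Finset.sum_congr rfl
    fun a _ => congrFun (congrFun hM ((a, x.1), x.2)) ((a, y.1), y.2)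

variable [DecidableEq α]

variable (α) in
def oneKroneckerAssoc (K : Matrix (γ × β) (γ × β) ℂ) : Matrix ((α × γ) × β) ((α × γ) × β) ℂ :=
  ((1 : Matrix α α ℂ) ⊗ₖ K).submatrix (Equiv.prodAssoc α γ β) (Equiv.prodAssoc α γ β)

lemma oneKroneckerAssoc_apply (K : Matrix (γ × β) (γ × β) ℂ) (x y : (α × γ) × β) :
    oneKroneckerAssoc α K x y = if x.1.1 = y.1.1 then K (x.1.2, x.2) (y.1.2, y.2) else 0 := by
  simp [oneKroneckerAssoc, one_apply]

lemma oneKroneckerAssoc_add (K K' : Matrix (γ × β) (γ × β) ℂ) :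
    oneKroneckerAssoc α (K + K') = oneKroneckerAssoc α K + oneKroneckerAssoc α K' := by
  rw [oneKroneckerAssoc, kronecker_add, submatrix_add]
  rfl

lemma one_kronecker_eq_oneKroneckerAssoc [DecidableEq γ] (H : Matrix β β ℂ) :
    (1 : Matrix (α × γ) (α × γ) ℂ) ⊗ₖ H = oneKroneckerAssoc α ((1 : Matrix γ γ ℂ) ⊗ₖ H) := by
  rw [oneKroneckerAssoc, ← kronecker_assoc', one_kronecker_one]
  rfl

lemma one_kronecker_add_eq_oneKroneckerAssoc [DecidableEq γ] (H : Matrix β β ℂ)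
    (K : Matrix (γ × β) (γ × β) ℂ) :
    (1 : Matrix (α × γ) (α × γ) ℂ) ⊗ₖ H +
        of (fun x y => if x.1.1 = y.1.1 then K (x.1.2, x.2) (y.1.2, y.2) else 0)
      = oneKroneckerAssoc α (K + (1 : Matrix γ γ ℂ) ⊗ₖ H) := by
  rw [oneKroneckerAssoc_add, ← one_kronecker_eq_oneKroneckerAssoc, add_comm]
  congr 1
  ext x y
  rw [of_apply, oneKroneckerAssoc_apply]

lemma trace_mul_oneKroneckerAssoc [Fintype α] [Fintype γ] [Fintype β]
    (M : Matrix ((α × γ) × β) ((α × γ) × β) ℂ) (K : Matrix (γ × β) (γ × β) ℂ) :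
    trace (M * oneKroneckerAssoc α K) = trace (ptraceFirst M * K) := by
  simp only [trace, diag, mul_apply, oneKroneckerAssoc_apply, ptraceFirst, of_apply,
    Fintype.sum_prod_type, mul_ite, mul_zero, Finset.sum_ite_irrel, Finset.sum_const_zero,
    Finset.sum_ite_eq', Finset.mem_univ, if_true, Finset.sum_mul]
  -- the two sides differ only in the position of the sum over `α`
  rw [Finset.sum_comm]
  refine Finset.sum_congr rfl fun q _ => ?_
  rw [Finset.sum_comm]
  refine Finset.sum_congr rfl fun r _ => ?_
  rw [Finset.sum_comm]
  refine Finset.sum_congr rfl fun q' _ => ?_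
  rw [Finset.sum_comm]

end PartialTrace

lemma mul_vecMulVec_star_mul_conjTranspose {m l : Type*} [Fintype m] (M : Matrix l m ℂ)
    (v : m → ℂ) : M * vecMulVec v (star v) * Mᴴ = vecMulVec (M *ᵥ v) (star (M *ᵥ v)) := by
  rw [mul_vecMulVec, vecMulVec_mul, star_mulVec]

lemma conjTranspose_mul_conj_mul_cancel {l m : Type*} [Fintype l] [Fintype m] [DecidableEq m]
    {W : Matrix l m ℂ} (hW : Wᴴ * W = 1) (P : Matrix m m ℂ) : Wᴴ * (W * P * Wᴴ) * W = P := by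
  simp only [Matrix.mul_assoc]
  rw [← Matrix.mul_assoc Wᴴ W, hW, Matrix.one_mul, Matrix.mul_one]

lemma trace_mul_mul_conjTranspose_mul {l m : Type*} [Fintype l] [Fintype m] (A : Matrix l m ℂ)
    (M : Matrix m m ℂ) (N : Matrix l l ℂ) : trace (A * M * Aᴴ * N) = trace (M * (Aᴴ * N * A)) := by
  rw [Matrix.mul_assoc _ Aᴴ, trace_mul_comm, ← Matrix.mul_assoc, trace_mul_comm]

section Conjugation

variable {α γ β ρ : Type*} [Fintype α] [Fintype γ] [Fintype β] [DecidableEq α] [DecidableEq γ]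

lemma ptraceFirst_one_kronecker_mul_mul_conjTranspose (W : Matrix ρ β ℂ)
    (M : Matrix ((α × γ) × β) ((α × γ) × β) ℂ) :
    ptraceFirst (((1 : Matrix (α × γ) (α × γ) ℂ) ⊗ₖ W) * M * ((1 : Matrix (α × γ) (α × γ) ℂ) ⊗ₖ W)ᴴ)
      = ((1 : Matrix γ γ ℂ) ⊗ₖ W) * ptraceFirst M * ((1 : Matrix γ γ ℂ) ⊗ₖ W)ᴴ := by
  ext ⟨q, r⟩ ⟨q', r'⟩
  simp only [ptraceFirst, of_apply, mul_apply, conjTranspose_apply, kroneckerMap_apply, one_apply,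
    Fintype.sum_prod_type, ite_mul, mul_ite, zero_mul, mul_zero, star_zero,
    apply_ite (star : ℂ → ℂ), Finset.sum_ite_irrel, Finset.sum_const_zero, Finset.sum_ite_eq,
    Finset.mem_univ, if_true, one_mul, Finset.sum_mul, Finset.mul_sum]
  rw [Finset.sum_comm]
  refine Finset.sum_congr rfl fun b _ => ?_
  rw [Finset.sum_comm]

lemma trace_one_kronecker_conj_mul_oneKroneckerAssoc [Fintype ρ] (W : Matrix ρ β ℂ)
    (M : Matrix ((α × γ) × β) ((α × γ) × β) ℂ) (K : Matrix (γ × ρ) (γ × ρ) ℂ) :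
    trace (((1 : Matrix (α × γ) (α × γ) ℂ) ⊗ₖ W) * M * ((1 : Matrix (α × γ) (α × γ) ℂ) ⊗ₖ W)ᴴ *
        oneKroneckerAssoc α K)
      = trace (ptraceFirst M * (((1 : Matrix γ γ ℂ) ⊗ₖ W)ᴴ * K * ((1 : Matrix γ γ ℂ) ⊗ₖ W))) := by
  rw [trace_mul_oneKroneckerAssoc, ptraceFirst_one_kronecker_mul_mul_conjTranspose,
    trace_mul_mul_conjTranspose_mul]

lemma ptraceFirst_vecMulVec_one_kronecker_mulVec (W : Matrix ρ β ℂ)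
    (x : (α × γ) × β → ℂ) :
    ptraceFirst (vecMulVec (((1 : Matrix (α × γ) (α × γ) ℂ) ⊗ₖ W) *ᵥ x)
        (star (((1 : Matrix (α × γ) (α × γ) ℂ) ⊗ₖ W) *ᵥ x)))
      = ((1 : Matrix γ γ ℂ) ⊗ₖ W) * ptraceFirst (vecMulVec x (star x)) *
          ((1 : Matrix γ γ ℂ) ⊗ₖ W)ᴴ := by
  rw [← mul_vecMulVec_star_mul_conjTranspose, ptraceFirst_one_kronecker_mul_mul_conjTranspose]

lemma trace_one_kronecker_conj_mul_kronecker_one [Fintype ρ] [DecidableEq β] [DecidableEq ρ]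
    {W : Matrix ρ β ℂ} (hW : Wᴴ * W = 1) (M : Matrix ((α × γ) × β) ((α × γ) × β) ℂ)
    (H : Matrix (α × γ) (α × γ) ℂ) :
    trace (((1 : Matrix (α × γ) (α × γ) ℂ) ⊗ₖ W) * M * ((1 : Matrix (α × γ) (α × γ) ℂ) ⊗ₖ W)ᴴ *
        (H ⊗ₖ (1 : Matrix ρ ρ ℂ)))
      = trace (M * (H ⊗ₖ (1 : Matrix β β ℂ))) := by
  rw [trace_mul_mul_conjTranspose_mul, conjTranspose_kronecker, conjTranspose_one,
    ← mul_kronecker_mul, ← mul_kronecker_mul, Matrix.one_mul, Matrix.mul_one, Matrix.mul_one, hW]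

end Conjugation

lemma conjTranspose_mul_self_eq_one_of_orthonormal {ι μ : Type*} [Fintype μ] [DecidableEq ι]
    {b : ι → μ → ℂ}
    (hb : ∀ j k, (fun r => starRingEnd ℂ (b j r)) ⬝ᵥ b k = if j = k then 1 else 0) :
    (of fun r j => b j r)ᴴ * (of fun r j => b j r) = 1 := by
  ext j k
  simpa [mul_apply, one_apply, dotProduct] using hb j k

lemma kronecker_mulVec_tens {κ κ' μ μ' : Type*} [Fintype κ'] [Fintype μ'] (A : Matrix κ κ' ℂ)
    (B : Matrix μ μ' ℂ) (x : κ' → ℂ) (y : μ' → ℂ) :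
    (A ⊗ₖ B) *ᵥ tens x y = tens (A *ᵥ x) (B *ᵥ y) := by
  ext ⟨i, j⟩
  simp only [mulVec, dotProduct, kroneckerMap_apply, tens, Fintype.sum_prod_type,
    Finset.sum_mul_sum]
  exact Finset.sum_congr rfl fun _ _ => Finset.sum_congr rfl fun _ _ => by ring

lemma sum_smul_tens_eq_one_kronecker_mulVec {ι κ μ : Type*} [Fintype ι] [DecidableEq ι]
    [Fintype κ] [DecidableEq κ] (lam : ι → ℂ) (a : ι → κ → ℂ) (b : ι → μ → ℂ) :
    ∑ j, lam j • tens (a j) (b j)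
      = ((1 : Matrix κ κ ℂ) ⊗ₖ of fun r j => b j r) *ᵥ ∑ j, lam j • tens (a j) (Pi.single j 1) := by
  simp only [mulVec_sum, mulVec_smul, kronecker_mulVec_tens, one_mulVec, mulVec_single_one]
  rfl

lemma dotProduct_mulVec_eq_trace_vecMulVec_mul {m : Type*} [Fintype m] (v w : m → ℂ)
    (M : Matrix m m ℂ) : w ⬝ᵥ (M *ᵥ v) = trace (vecMulVec v w * M) := by
  rw [vecMulVec_mul, trace_vecMulVec, dotProduct_mulVec, dotProduct_comm]

theorem gluing_part_three_general
    {A Q R B : ℕ} (n : ℝ)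
    (a : Fin B → (Fin A × Fin Q → ℂ)) (b : Fin B → (Fin R → ℂ))
    (hb : ∀ j k : Fin B, (fun r => starRingEnd ℂ (b j r)) ⬝ᵥ b k = if j = k then 1 else 0)
    (lam : Fin B → ℝ)
    (v : (Fin A × Fin Q) × Fin R → ℂ)
    (hv : v = ∑ j, (lam j : ℂ) • tens (a j) (b j))
    (U : Matrix (Fin R) (Fin B) ℂ) (hU : U = Matrix.of fun r j => b j r)
    (σ : Matrix ((Fin A × Fin Q) × Fin B) ((Fin A × Fin Q) × Fin B) ℂ)
    (hσpsd : σ.PosSemidef)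
    (σ' : Matrix ((Fin A × Fin Q) × Fin R) ((Fin A × Fin Q) × Fin R) ℂ)
    (hσ' : σ' = ((1 : Matrix (Fin A × Fin Q) (Fin A × Fin Q) ℂ) ⊗ₖ U) * σ *
        ((1 : Matrix (Fin A × Fin Q) (Fin A × Fin Q) ℂ) ⊗ₖ U)ᴴ)
    (contv : Matrix (Fin Q × Fin B) (Fin Q × Fin B) ℂ)
    (hcontv : contv = ((1 : Matrix (Fin Q) (Fin Q) ℂ) ⊗ₖ Uᴴ) *
        ptraceFirst (Matrix.vecMulVec v (star v)) *
        ((1 : Matrix (Fin Q) (Fin Q) ℂ) ⊗ₖ U))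
    (HL : Matrix (Fin A × Fin Q) (Fin A × Fin Q) ℂ)
    (HR : Matrix (Fin R) (Fin R) ℂ)
    (Hi : Matrix (Fin Q × Fin R) (Fin Q × Fin R) ℂ)
    (HiFull : Matrix ((Fin A × Fin Q) × Fin R) ((Fin A × Fin Q) × Fin R) ℂ)
    (hHiFull : HiFull = Matrix.of fun x y =>
        if x.1.1 = y.1.1 then Hi (x.1.2, x.2) (y.1.2, y.2) else 0)
    (Hfull : Matrix ((Fin A × Fin Q) × Fin R) ((Fin A × Fin Q) × Fin R) ℂ)
    (hHfull : Hfull = HL ⊗ₖ (1 : Matrix (Fin R) (Fin R) ℂ) +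
        (1 : Matrix (Fin A × Fin Q) (Fin A × Fin Q) ℂ) ⊗ₖ HR + HiFull)
    (hnorm : ∀ w : Fin Q × Fin R → ℂ,
        ‖(star w) ⬝ᵥ ((Hi + (1 : Matrix (Fin Q) (Fin Q) ℂ) ⊗ₖ HR) *ᵥ w)‖ ≤
          n * ((star w) ⬝ᵥ w).re) :
    (Matrix.trace (σ' * Hfull)).re ≤
      (Matrix.trace (σ * (HL ⊗ₖ (1 : Matrix (Fin B) (Fin B) ℂ)))).re +
      ((star v) ⬝ᵥ
        (((1 : Matrix (Fin A × Fin Q) (Fin A × Fin Q) ℂ) ⊗ₖ HR + HiFull) *ᵥ v)).re +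
      n * traceNorm (ptraceFirst σ - contv) := by
  set W := (1 : Matrix (Fin Q) (Fin Q) ℂ) ⊗ₖ U
  set K := Hi + (1 : Matrix (Fin Q) (Fin Q) ℂ) ⊗ₖ HR
  set v₀ := ∑ j, (lam j : ℂ) • tens (a j) (Pi.single j 1)
  have hUU : Uᴴ * U = 1 := hU ▸ conjTranspose_mul_self_eq_one_of_orthonormal hb
  have hWH : (1 : Matrix (Fin Q) (Fin Q) ℂ) ⊗ₖ Uᴴ = Wᴴ := by
    rw [conjTranspose_kronecker, conjTranspose_one]
  have hWW : Wᴴ * W = 1 := by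
    rw [← hWH, ← mul_kronecker_mul, Matrix.one_mul, hUU, one_kronecker_one]
  have hv₀ : v = ((1 : Matrix (Fin A × Fin Q) (Fin A × Fin Q) ℂ) ⊗ₖ U) *ᵥ v₀ := by
    rw [hv, hU, sum_smul_tens_eq_one_kronecker_mulVec]
  have hcont : contv = ptraceFirst (vecMulVec v₀ (star v₀)) := by
    rw [hcontv, hWH, hv₀, ptraceFirst_vecMulVec_one_kronecker_mulVec,
      conjTranspose_mul_conj_mul_cancel hWW]
  have hlocal : (1 : Matrix (Fin A × Fin Q) (Fin A × Fin Q) ℂ) ⊗ₖ HR + HiFull =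
      oneKroneckerAssoc (Fin A) K := by
    rw [hHiFull, one_kronecker_add_eq_oneKroneckerAssoc]
  have hσ'_term : trace (σ' * Hfull) = trace (σ * (HL ⊗ₖ (1 : Matrix (Fin B) (Fin B) ℂ))) +
      trace (ptraceFirst σ * (Wᴴ * K * W)) := by
    rw [hHfull, add_assoc, hlocal, Matrix.mul_add, trace_add, hσ',
      trace_one_kronecker_conj_mul_kronecker_one hUU,
      trace_one_kronecker_conj_mul_oneKroneckerAssoc]
  have hv_term : star v ⬝ᵥ (((1 : Matrix (Fin A × Fin Q) (Fin A × Fin Q) ℂ) ⊗ₖ HR + HiFull) *ᵥ v) =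
      trace (contv * (Wᴴ * K * W)) := by
    rw [dotProduct_mulVec_eq_trace_vecMulVec_mul, hv₀, hlocal,
      ← mul_vecMulVec_star_mul_conjTranspose, trace_one_kronecker_conj_mul_oneKroneckerAssoc, hcont]
  have hX : (ptraceFirst σ - contv).IsHermitian := (isHermitian_ptraceFirst hσpsd.1).sub
    (hcont ▸ isHermitian_ptraceFirst (posSemidef_vecMulVec_self_star v₀).1)
  have hbound := re_trace_mul_le_mul_traceNorm hX
    (norm_dotProduct_conjTranspose_mul_mul_mulVec_le hWW hnorm)
  rw [Matrix.sub_mul, trace_sub, Complex.sub_re] at hbound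
  rw [hσ'_term, hv_term, Complex.add_re]
  linarith

/-- Gluing lemma, part 3: with `σ` a density matrix on `H_L ⊗ ℂ^B`
(`H_L = H_{[1,i-1]} ⊗ H_i` modelled on index `Fin A × Fin Q`, `H_R` on `Fin R`),
`v ∈ H_L ⊗ H_R` a unit vector with Schmidt decomposition `v = Σ_j λ_j a_j ⊗ b_j`,
`U_v` the associated isometry and `σ' = (Id ⊗ U_v) σ (Id ⊗ U_v)ᴴ`: if
`H = H_L' + H_i + H_R'` with `H_L'` acting on `H_L`, `H_R'` on `H_R`, `H_i` on the
`i`-th qudit and the first qudit of `H_R`, and `‖H_i + H_R'‖ ≤ n`, then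
`Tr(σ' H) ≤ Tr(σ (H_L' ⊗ Id)) + ⟨v, (H_R' + H_i) v⟩ + n · ‖Tr_{[1..i-1]}(σ) - cont(v)‖₁`. -/
theorem gluing_part_three
    {A Q R B : ℕ} (n : ℝ)
    (a : Fin B → (Fin A × Fin Q → ℂ)) (b : Fin B → (Fin R → ℂ))
    (ha : ∀ j k : Fin B, (fun l => starRingEnd ℂ (a j l)) ⬝ᵥ a k = if j = k then 1 else 0)
    (hb : ∀ j k : Fin B, (fun r => starRingEnd ℂ (b j r)) ⬝ᵥ b k = if j = k then 1 else 0)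
    (lam : Fin B → ℝ) (hlam : ∀ j, 0 ≤ lam j)
    (hmono : ∀ j k : Fin B, j ≤ k → lam k ≤ lam j)
    (v : (Fin A × Fin Q) × Fin R → ℂ)
    (hv : v = ∑ j, (lam j : ℂ) • tens (a j) (b j))
    (hvunit : (star v) ⬝ᵥ v = 1)
    (U : Matrix (Fin R) (Fin B) ℂ) (hU : U = Matrix.of fun r j => b j r)
    (σ : Matrix ((Fin A × Fin Q) × Fin B) ((Fin A × Fin Q) × Fin B) ℂ)
    (hσpsd : σ.PosSemidef) (hσtr : σ.trace = 1)
    (σ' : Matrix ((Fin A × Fin Q) × Fin R) ((Fin A × Fin Q) × Fin R) ℂ)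
    (hσ' : σ' = ((1 : Matrix (Fin A × Fin Q) (Fin A × Fin Q) ℂ) ⊗ₖ U) * σ *
        ((1 : Matrix (Fin A × Fin Q) (Fin A × Fin Q) ℂ) ⊗ₖ U)ᴴ)
    (contv : Matrix (Fin Q × Fin B) (Fin Q × Fin B) ℂ)
    (hcontv : contv = ((1 : Matrix (Fin Q) (Fin Q) ℂ) ⊗ₖ Uᴴ) *
        ptraceFirst (Matrix.vecMulVec v (star v)) *
        ((1 : Matrix (Fin Q) (Fin Q) ℂ) ⊗ₖ U))
    (HL : Matrix (Fin A × Fin Q) (Fin A × Fin Q) ℂ) (hHL : HL.IsHermitian)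
    (HR : Matrix (Fin R) (Fin R) ℂ) (hHR : HR.IsHermitian)
    (Hi : Matrix (Fin Q × Fin R) (Fin Q × Fin R) ℂ) (hHi : Hi.IsHermitian)
    (HiFull : Matrix ((Fin A × Fin Q) × Fin R) ((Fin A × Fin Q) × Fin R) ℂ)
    (hHiFull : HiFull = Matrix.of fun x y =>
        if x.1.1 = y.1.1 then Hi (x.1.2, x.2) (y.1.2, y.2) else 0)
    (Hfull : Matrix ((Fin A × Fin Q) × Fin R) ((Fin A × Fin Q) × Fin R) ℂ)
    (hHfull : Hfull = HL ⊗ₖ (1 : Matrix (Fin R) (Fin R) ℂ) +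
        (1 : Matrix (Fin A × Fin Q) (Fin A × Fin Q) ℂ) ⊗ₖ HR + HiFull)
    (hnorm : ∀ w : Fin Q × Fin R → ℂ,
        ‖(star w) ⬝ᵥ ((Hi + (1 : Matrix (Fin Q) (Fin Q) ℂ) ⊗ₖ HR) *ᵥ w)‖ ≤
          n * ((star w) ⬝ᵥ w).re) :
    (Matrix.trace (σ' * Hfull)).re ≤
      (Matrix.trace (σ * (HL ⊗ₖ (1 : Matrix (Fin B) (Fin B) ℂ)))).re +
      ((star v) ⬝ᵥ
        (((1 : Matrix (Fin A × Fin Q) (Fin A × Fin Q) ℂ) ⊗ₖ HR + HiFull) *ᵥ v)).re +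
      n * traceNorm (ptraceFirst σ - contv) :=
  gluing_part_three_general n a b hb lam v hv U hU σ hσpsd σ' hσ' contv hcontv HL HR Hi HiFull
    hHiFull Hfull hHfull hnorm
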